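/- Let λ be a Young diagram contained in the t × (n−t+1) rectangle and let m ≥ 1 with λ_m ≥ m, so that the m-th diagonal hook H_m of λ exists: H_m consists of the boxes (m,j) with m ≤ j ≤ λ_m together with the boxes (i,m) with i > m and λ_i ≥ m. Write a := λ_m − m + 1 (arm) and b := #{i > m : λ_i ≥ m} (leg). Then Σ_{(i,j)∈H_m} α_{t−i+j} = α_{t−b} + α_{t−b+1} + ⋯ + α_{t+a−1} = e_{t−b} − e_{t+a} in ℤ^{n+1}. In particular, the weight of every diagonal hook of λ is a positive root of type A_n. -/

import Mathlib

/-!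
Reading off residues, the arm of the hook `H_m` carries the residues `t, t+1, …, t+a-1` and
its leg the residues `t-b, …, t-1`, so its weight is the sum of the simple roots over the
interval `[t-b, t+a)`, which telescopes to `e_{t-b} - e_{t+a}`. The only input from the
shape of `λ` is that the rows `i > m` with `λ_i ≥ m` form an initial segment `m+1, …, m+b`,
because the parts are weakly decreasing.
-/

namespace Stmt9

/-- Standard basis vector `e_k` (1-indexed) of `ℤ^{n+1}`. -/
def E (n k : ℕ) : Fin (n + 1) → ℤ := fun x => if (x : ℕ) + 1 = k then 1 else 0

/-- Simple root `α_r = e_r - e_{r+1}` of type `A_n` (1-indexed). -/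
def alpha (n r : ℕ) : Fin (n + 1) → ℤ := E n r - E n (r + 1)

open Finset

theorem sum_alpha_Ico (n : ℕ) {a b : ℕ} (hab : a ≤ b) :
    ∑ r ∈ Ico a b, alpha n r = E n a - E n b := by
  rw [← neg_sub (E n b), ← sum_Ico_sub (E n) hab, ← sum_neg_distrib]
  exact sum_congr rfl fun r _ => (neg_sub _ _).symm

section Reindex

variable {M : Type*} [AddCommMonoid M] (f : ℕ → M)

theorem sum_Icc_comp_add_sub_eq_sum_Ico {m k : ℕ} (t : ℕ) (hmk : m ≤ k) :
    ∑ j ∈ Icc m k, f (t + j - m) = ∑ r ∈ Ico t (t + (k - m + 1)), f r := by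
  refine sum_nbij' (fun j => t + j - m) (fun r => r + m - t) ?_ ?_ ?_ ?_ (fun _ _ => rfl) <;>
    intro x hx <;> simp only [mem_Icc, mem_Ico] at hx ⊢ <;> omega

theorem sum_Ioc_comp_sub_eq_sum_Ico {m b t : ℕ} (hbt : m + b ≤ t) :
    ∑ i ∈ Ioc m (m + b), f (t + m - i) = ∑ r ∈ Ico (t - b) t, f r := by
  refine sum_nbij' (fun i => t + m - i) (fun r => t + m - r) ?_ ?_ ?_ ?_ (fun _ _ => rfl) <;>
    intro x hx <;> simp only [mem_Ioc, mem_Ico] at hx ⊢ <;> omega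

end Reindex

theorem filter_Ioc_eq_Ioc_card {p : ℕ → Prop} [DecidablePred p] {m t : ℕ}
    (hp : ∀ i j, m < i → i ≤ j → p j → p i) :
    (Ioc m t).filter p = Ioc m (m + ((Ioc m t).filter p).card) := by
  set S := (Ioc m t).filter p
  have hcard : S.card ≤ t - m := (card_filter_le _ _).trans (Nat.card_Ioc m t).le
  ext i
  constructor
  · intro hi
    obtain ⟨⟨hmi, hit⟩, hpi⟩ := mem_filter.1 hi |>.imp_left mem_Ioc.1
    have hsub : Ioc m i ⊆ S := fun j hj => by
      obtain ⟨hmj, hji⟩ := mem_Ioc.1 hj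
      exact mem_filter.2 ⟨mem_Ioc.2 ⟨hmj, hji.trans hit⟩, hp j i hmj hji hpi⟩
    have := card_le_card hsub
    rw [Nat.card_Ioc] at this
    exact mem_Ioc.2 ⟨hmi, by omega⟩
  · intro hi
    obtain ⟨hmi, him⟩ := mem_Ioc.1 hi
    refine mem_filter.2 ⟨mem_Ioc.2 ⟨hmi, by omega⟩, ?_⟩
    by_contra hpi
    -- Otherwise `S` misses every row from `i` on, so it is too small.
    have hsub : S ⊆ Ioc m (i - 1) := fun j hj => by
      obtain ⟨⟨hmj, -⟩, hpj⟩ := mem_filter.1 hj |>.imp_left mem_Ioc.1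
      refine mem_Ioc.2 ⟨hmj, ?_⟩
      by_contra hji
      exact hpi (hp i j hmi (by omega) hpj)
    have := card_le_card hsub
    rw [Nat.card_Ioc] at this
    omega

theorem stmt9 (n t : ℕ) (htn : t ≤ n)
    (l : ℕ → ℕ)
    (hmono : ∀ i j, 1 ≤ i → i ≤ j → l j ≤ l i)
    (hbd : ∀ i, l i ≤ n - t + 1)
    (hzero : ∀ i, t < i → l i = 0)
    (m : ℕ) (hm : 1 ≤ m) (hml : m ≤ l m) :
    ((∑ j ∈ Finset.Icc m (l m), alpha n (t + j - m)) +
        ∑ i ∈ (Finset.Ioc m t).filter (fun i => m ≤ l i), alpha n (t + m - i)) =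
      E n (t - ((Finset.Ioc m t).filter (fun i => m ≤ l i)).card) -
        E n (t + (l m - m + 1)) ∧
    1 ≤ t - ((Finset.Ioc m t).filter (fun i => m ≤ l i)).card ∧
    t + (l m - m + 1) ≤ n + 1 := by
  set b := ((Ioc m t).filter (fun i => m ≤ l i)).card
  have hmt : m ≤ t := by
    by_contra h
    have := hzero m (by omega)
    omega
  have hleg : (Ioc m t).filter (fun i => m ≤ l i) = Ioc m (m + b) :=
    filter_Ioc_eq_Ioc_card fun i j hmi hij hj => hj.trans (hmono i j (by omega) hij)
  have hbt : m + b ≤ t := by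
    have := card_le_card (filter_subset (fun i => m ≤ l i) (Ioc m t))
    rw [Nat.card_Ioc] at this
    omega
  refine ⟨?_, by omega, by have := hbd m; omega⟩
  rw [hleg, sum_Icc_comp_add_sub_eq_sum_Ico _ t hml, sum_Ioc_comp_sub_eq_sum_Ico _ hbt,
    add_comm (∑ r ∈ Ico t _, alpha n r),
    sum_Ico_consecutive _ (Nat.sub_le t b) (Nat.le_add_right _ _)]
  exact sum_alpha_Ico n (by omega)

end Stmt9
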